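/- arXiv:0904.4083 — 2 statements merged into one kernel-verified Lean document; each statement's English description precedes it below -/
import Mathlib

section
/- Let a and b be vectors in Euclidean space ℝ³ with ‖b‖ = 1 and ‖a‖ ≤ 1. Then h₂((1+‖a‖)/2) ≤ h₂((1+⟨b,a⟩)/2), and equality holds if and only if a is a scalar multiple of b. -/
open scoped RealInnerProductSpace

/-- Binary entropy function (base-2 logarithm), with the convention `0 * log 0 = 0`. -/
noncomputable def h2 (p : ℝ) : ℝ := -(p * Real.logb 2 p) - (1 - p) * Real.logb 2 (1 - p)

/-!
Writing `f t = h₂((1 + t)/2)`, the symmetry `h₂(p) = h₂(1 - p)` gives `f t = f |t|`, and `f` is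
strictly decreasing on `[0, 1]`. By Cauchy–Schwarz `|⟨b, a⟩| ≤ ‖a‖ ≤ 1`, hence
`f ‖a‖ ≤ f |⟨b, a⟩| = f ⟨b, a⟩`, with equality iff `|⟨b, a⟩| = ‖a‖`, i.e. iff `a ∈ ℝ b`.
-/

open Real

lemma h2_eq_binEntropy_div_log_two (p : ℝ) : h2 p = binEntropy p / log 2 := by
  simp only [h2, binEntropy, logb, log_inv]
  ring

lemma binEntropy_one_add_abs_div_two (x : ℝ) :
    binEntropy ((1 + |x|) / 2) = binEntropy ((1 + x) / 2) := by
  rcases abs_cases x with ⟨h, _⟩ | ⟨h, _⟩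
  · rw [h]
  · rw [h, show (1 + -x) / 2 = 1 - (1 + x) / 2 by ring, binEntropy_one_sub]

lemma strictAntiOn_binEntropy_one_add_div_two :
    StrictAntiOn (fun t : ℝ ↦ binEntropy ((1 + t) / 2)) (Set.Icc 0 1) := by
  intro s hs t ht hst
  refine binEntropy_strictAntiOn ?_ ?_ (by linarith)
  · constructor <;> linarith [hs.1, hs.2]
  · constructor <;> linarith [ht.1, ht.2]

lemma abs_real_inner_eq_norm_iff {E : Type*} [NormedAddCommGroup E] [InnerProductSpace ℝ E]
    {a b : E} (hb : ‖b‖ = 1) : |⟪b, a⟫| = ‖a‖ ↔ ∃ c : ℝ, a = c • b := by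
  have hb₀ : b ≠ 0 := norm_ne_zero_iff.mp (by rw [hb]; exact one_ne_zero)
  have := (norm_inner_eq_norm_tfae ℝ b a).out 0 2
  rwa [hb, one_mul, Real.norm_eq_abs, or_iff_right hb₀] at this

theorem stmt1 (a b : EuclideanSpace ℝ (Fin 3)) (hb : ‖b‖ = 1) (ha : ‖a‖ ≤ 1) :
    h2 ((1 + ‖a‖) / 2) ≤ h2 ((1 + ⟪b, a⟫) / 2) ∧
    (h2 ((1 + ‖a‖) / 2) = h2 ((1 + ⟪b, a⟫) / 2) ↔ ∃ c : ℝ, a = c • b) := by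
  have hcs : |⟪b, a⟫| ≤ ‖a‖ := by
    simpa [hb] using abs_real_inner_le_norm b a
  have hinner : |⟪b, a⟫| ∈ Set.Icc (0 : ℝ) 1 := ⟨abs_nonneg _, hcs.trans ha⟩
  have hnorm : ‖a‖ ∈ Set.Icc (0 : ℝ) 1 := ⟨norm_nonneg _, ha⟩
  have hlog : 0 < log 2 := log_pos one_lt_two
  have hf := strictAntiOn_binEntropy_one_add_div_two
  rw [h2_eq_binEntropy_div_log_two, h2_eq_binEntropy_div_log_two,
    div_le_div_iff_of_pos_right hlog, div_left_inj' hlog.ne',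
    ← binEntropy_one_add_abs_div_two ⟪b, a⟫, hf.le_iff_ge hnorm hinner, hf.eq_iff_eq hnorm hinner]
  exact ⟨hcs, abs_real_inner_eq_norm_iff hb⟩
end

section
/- Let e_z, e_x, e_y be real numbers such that q_i := (1+e_z+e_x+e_y)/4, q_z := (1+e_z−e_x−e_y)/4, q_x := (1−e_z+e_x−e_y)/4, q_y := (1−e_z−e_x+e_y)/4 are all nonnegative, let A, B ∈ SO(3), and let R = B·diag(e_z,e_x,e_y)·A. Set H := −(q_i log₂ q_i + q_z log₂ q_z + q_x log₂ q_x + q_y log₂ q_y), and for a real 3×3 matrix M define K(M) := 1 − H + h₂((1+‖M e₁‖)/2) − h₂((1+M₁₁)/2). Then K(O_B·R·O_A) ≤ 1 − H for all O_A, O_B ∈ SO(3), and equality holds for O_A = Aᵀ and O_B = Bᵀ; hence the supremum of K(O_B·R·O_A) over O_A, O_B ∈ SO(3) equals 1 − H. -/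
/-- `M` is a real 3×3 special orthogonal matrix. -/
def SO3 (M : Matrix (Fin 3) (Fin 3) ℝ) : Prop := M.transpose * M = 1 ∧ M.det = 1

/-- Euclidean norm of the first column of a 3×3 real matrix. -/
noncomputable def colNorm3 (M : Matrix (Fin 3) (Fin 3) ℝ) : ℝ :=
  Real.sqrt ((M 0 0) ^ 2 + (M 1 0) ^ 2 + (M 2 0) ^ 2)

open Matrix

lemma h2_eq_binEntropy_div_log (p : ℝ) : h2 p = Real.binEntropy p / Real.log 2 := by
  simp only [h2, Real.binEntropy, Real.logb, Real.log_inv]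
  ring

lemma h2_one_sub (p : ℝ) : h2 (1 - p) = h2 p := by
  rw [h2_eq_binEntropy_div_log, h2_eq_binEntropy_div_log, Real.binEntropy_one_sub]

lemma h2_antitoneOn : AntitoneOn h2 (Set.Icc 2⁻¹ 1) := fun a ha b hb hab => by
  rw [h2_eq_binEntropy_div_log, h2_eq_binEntropy_div_log]
  exact div_le_div_of_nonneg_right (Real.binEntropy_strictAntiOn.antitoneOn ha hb hab)
    (Real.log_nonneg one_le_two)

lemma h2_one_add_abs_div_two (m : ℝ) : h2 ((1 + |m|) / 2) = h2 ((1 + m) / 2) := by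
  rcases le_total 0 m with hm | hm
  · rw [abs_of_nonneg hm]
  · rw [abs_of_nonpos hm, ← h2_one_sub ((1 + m) / 2)]
    ring_nf

lemma h2_one_add_div_two_le {m n : ℝ} (hmn : |m| ≤ n) (hn : n ≤ 1) :
    h2 ((1 + n) / 2) ≤ h2 ((1 + m) / 2) := by
  rw [← h2_one_add_abs_div_two m]
  have hm := abs_nonneg m
  exact h2_antitoneOn ⟨by linarith, by linarith⟩ ⟨by linarith, by linarith⟩ (by linarith)

section Orthogonal

variable {n : Type*} [Fintype n] [DecidableEq n]

lemma transpose_mul_self_mul {P Q : Matrix n n ℝ} (hP : Pᵀ * P = 1) (hQ : Qᵀ * Q = 1) :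
    (P * Q)ᵀ * (P * Q) = 1 := by
  rw [transpose_mul, Matrix.mul_assoc, ← Matrix.mul_assoc Pᵀ, hP, Matrix.one_mul, hQ]

lemma mulVec_dotProduct_mulVec_self {P : Matrix n n ℝ} (hP : Pᵀ * P = 1) (v : n → ℝ) :
    P *ᵥ v ⬝ᵥ P *ᵥ v = v ⬝ᵥ v := by
  rw [dotProduct_mulVec, ← mulVec_transpose, mulVec_mulVec, hP, one_mulVec]

lemma diagonal_mulVec_dotProduct_self_le {d : n → ℝ} (hd : ∀ i, |d i| ≤ 1) (w : n → ℝ) :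
    diagonal d *ᵥ w ⬝ᵥ diagonal d *ᵥ w ≤ w ⬝ᵥ w := by
  simp only [dotProduct, mulVec_diagonal]
  refine Finset.sum_le_sum fun i _ => ?_
  have hdi : d i ^ 2 ≤ 1 := by nlinarith [sq_abs (d i), abs_nonneg (d i), hd i]
  nlinarith [mul_self_nonneg (w i)]

lemma col_dotProduct_self_le_one {P Q : Matrix n n ℝ} (hP : Pᵀ * P = 1) (hQ : Qᵀ * Q = 1)
    {d : n → ℝ} (hd : ∀ i, |d i| ≤ 1) (j : n) :
    (P * diagonal d * Q).col j ⬝ᵥ (P * diagonal d * Q).col j ≤ 1 := by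
  have hcol : (P * diagonal d * Q).col j = P *ᵥ (diagonal d *ᵥ (Q *ᵥ Pi.single j 1)) := by
    rw [mulVec_mulVec, mulVec_mulVec, mulVec_single_one]
  rw [hcol, mulVec_dotProduct_mulVec_self hP]
  calc _ ≤ Q *ᵥ Pi.single j 1 ⬝ᵥ Q *ᵥ Pi.single j 1 := diagonal_mulVec_dotProduct_self_le hd _
    _ = 1 := by rw [mulVec_dotProduct_mulVec_self hQ, single_one_dotProduct, Pi.single_eq_same]

end Orthogonal

lemma colNorm3_eq_sqrt (M : Matrix (Fin 3) (Fin 3) ℝ) :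
    colNorm3 M = √(M.col 0 ⬝ᵥ M.col 0) := by
  simp only [colNorm3, dotProduct, Fin.sum_univ_three, col_apply, sq]

lemma abs_apply_zero_zero_le_colNorm3 (M : Matrix (Fin 3) (Fin 3) ℝ) : |M 0 0| ≤ colNorm3 M :=
  Real.abs_le_sqrt (by nlinarith [sq_nonneg (M 1 0), sq_nonneg (M 2 0)])

lemma colNorm3_mul_diagonal_mul_le_one {P Q : Matrix (Fin 3) (Fin 3) ℝ} (hP : Pᵀ * P = 1)
    (hQ : Qᵀ * Q = 1) {d : Fin 3 → ℝ} (hd : ∀ i, |d i| ≤ 1) :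
    colNorm3 (P * diagonal d * Q) ≤ 1 := by
  rw [colNorm3_eq_sqrt, Real.sqrt_le_one]
  exact col_dotProduct_self_le_one hP hQ hd 0

lemma colNorm3_diagonal (a b c : ℝ) : colNorm3 (diagonal ![a, b, c]) = |a| := by
  simp [colNorm3, Real.sqrt_sq_eq_abs]

lemma SO3.transpose {M : Matrix (Fin 3) (Fin 3) ℝ} (h : SO3 M) : SO3 Mᵀ :=
  ⟨by rw [transpose_transpose]; exact mul_eq_one_comm.mp h.1, by rw [det_transpose]; exact h.2⟩

theorem stmt2_general (ez ex ey : ℝ)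
    (hqi : 0 ≤ (1 + ez + ex + ey) / 4) (hqz : 0 ≤ (1 + ez - ex - ey) / 4)
    (hqx : 0 ≤ (1 - ez + ex - ey) / 4) (hqy : 0 ≤ (1 - ez - ex + ey) / 4)
    (A B : Matrix (Fin 3) (Fin 3) ℝ) (hA : SO3 A) (hB : SO3 B)
    (R : Matrix (Fin 3) (Fin 3) ℝ)
    (hR : R = B * Matrix.diagonal ![ez, ex, ey] * A)
    (H : ℝ)
    (K : Matrix (Fin 3) (Fin 3) ℝ → ℝ)
    (hK : ∀ M, K M = 1 - H + h2 ((1 + colNorm3 M) / 2) - h2 ((1 + M 0 0) / 2)) :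
    (∀ OA OB, SO3 OA → SO3 OB → K (OB * R * OA) ≤ 1 - H) ∧
    K (B.transpose * R * A.transpose) = 1 - H ∧
    sSup {r : ℝ | ∃ OA OB, SO3 OA ∧ SO3 OB ∧ r = K (OB * R * OA)} = 1 - H := by
  have hz : |ez| ≤ 1 := abs_le.mpr ⟨by linarith, by linarith⟩
  have hx : |ex| ≤ 1 := abs_le.mpr ⟨by linarith, by linarith⟩
  have hy : |ey| ≤ 1 := abs_le.mpr ⟨by linarith, by linarith⟩
  have hd : ∀ i, |![ez, ex, ey] i| ≤ 1 := by
    intro i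
    fin_cases i <;> assumption
  have hle : ∀ OA OB, SO3 OA → SO3 OB → K (OB * R * OA) ≤ 1 - H := by
    intro OA OB hOA hOB
    have hM : OB * R * OA = OB * B * diagonal ![ez, ex, ey] * (A * OA) := by
      simp only [hR, Matrix.mul_assoc]
    have hcol := colNorm3_mul_diagonal_mul_le_one (transpose_mul_self_mul hOB.1 hB.1)
      (transpose_mul_self_mul hA.1 hOA.1) hd
    rw [← hM] at hcol
    have hentropy := h2_one_add_div_two_le (abs_apply_zero_zero_le_colNorm3 _) hcol
    rw [hK]
    linarith
  have hdiag : Bᵀ * R * Aᵀ = diagonal ![ez, ex, ey] := by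
    rw [hR, show Bᵀ * (B * diagonal ![ez, ex, ey] * A) * Aᵀ
        = Bᵀ * B * diagonal ![ez, ex, ey] * (A * Aᵀ) by simp only [Matrix.mul_assoc],
      hB.1, mul_eq_one_comm.mp hA.1, Matrix.one_mul, Matrix.mul_one]
  have heq : K (Bᵀ * R * Aᵀ) = 1 - H := by
    rw [hK, hdiag, colNorm3_diagonal, h2_one_add_abs_div_two, diagonal_apply_eq]
    simp
  refine ⟨hle, heq, IsGreatest.csSup_eq ⟨?_, ?_⟩⟩
  · exact ⟨Aᵀ, Bᵀ, hA.transpose, hB.transpose, heq.symm⟩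
  · rintro r ⟨OA, OB, hOA, hOB, rfl⟩
    exact hle OA OB hOA hOB

theorem stmt2 (ez ex ey : ℝ)
    (hqi : 0 ≤ (1 + ez + ex + ey) / 4) (hqz : 0 ≤ (1 + ez - ex - ey) / 4)
    (hqx : 0 ≤ (1 - ez + ex - ey) / 4) (hqy : 0 ≤ (1 - ez - ex + ey) / 4)
    (A B : Matrix (Fin 3) (Fin 3) ℝ) (hA : SO3 A) (hB : SO3 B)
    (R : Matrix (Fin 3) (Fin 3) ℝ)
    (hR : R = B * Matrix.diagonal ![ez, ex, ey] * A)
    (H : ℝ)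
    (hH : H = -((1 + ez + ex + ey) / 4 * Real.logb 2 ((1 + ez + ex + ey) / 4)
      + (1 + ez - ex - ey) / 4 * Real.logb 2 ((1 + ez - ex - ey) / 4)
      + (1 - ez + ex - ey) / 4 * Real.logb 2 ((1 - ez + ex - ey) / 4)
      + (1 - ez - ex + ey) / 4 * Real.logb 2 ((1 - ez - ex + ey) / 4)))
    (K : Matrix (Fin 3) (Fin 3) ℝ → ℝ)
    (hK : ∀ M, K M = 1 - H + h2 ((1 + colNorm3 M) / 2) - h2 ((1 + M 0 0) / 2)) :
    (∀ OA OB, SO3 OA → SO3 OB → K (OB * R * OA) ≤ 1 - H) ∧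
    K (B.transpose * R * A.transpose) = 1 - H ∧
    sSup {r : ℝ | ∃ OA OB, SO3 OA ∧ SO3 OB ∧ r = K (OB * R * OA)} = 1 - H :=
  stmt2_general ez ex ey hqi hqz hqx hqy A B hA hB R hR H K hK
end
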